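/- The symmetrizer matrix factorizes as S_{d,r} = Π_{k=1}^r (T_{d,k} ⊗ I_{d^{r−k}}) = (T_{d,1} ⊗ I_{d^{r−1}})(T_{d,2} ⊗ I_{d^{r−2}})···(T_{d,r−1} ⊗ I_d) T_{d,r}, for any r ≥ 1. -/

import Mathlib

open Matrix

/-- Kronecker product of real matrices, with `Fin` index arithmetic: the row index
`i < m*p` encodes the pair `(i / p, i % p)` (first factor most significant). -/
def kron {m n p q : ℕ} (A : Matrix (Fin m) (Fin n) ℝ) (B : Matrix (Fin p) (Fin q) ℝ) :
    Matrix (Fin (m * p)) (Fin (n * q)) ℝ := fun i j =>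
  A ⟨i.val / p, Nat.div_lt_of_lt_mul (Nat.mul_comm m p ▸ i.isLt)⟩
    ⟨j.val / q, Nat.div_lt_of_lt_mul (Nat.mul_comm n q ▸ j.isLt)⟩ *
  B ⟨i.val % p, Nat.mod_lt _ (by
      rcases Nat.eq_zero_or_pos p with hp | hp
      · exact absurd i.isLt (by simp [hp])
      · exact hp)⟩
    ⟨j.val % q, Nat.mod_lt _ (by
      rcases Nat.eq_zero_or_pos q with hq | hq
      · exact absurd j.isLt (by simp [hq])
      · exact hq)⟩

/-- The commutation matrix `K_{r,s}` of order `rs × rs`, characterized by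
`K_{r,s} vec(M) = vec(Mᵀ)` for every `r × s` matrix `M` (column-major `vec`). -/
def commMat (r s : ℕ) : Matrix (Fin (r * s)) (Fin (r * s)) ℝ := fun a b =>
  if (a : ℕ) = (b : ℕ) / r + (b : ℕ) % r * s then 1 else 0

/-- Cast a matrix along equalities of its `Fin` dimensions. -/
def mcast {m n m' n' : ℕ} (hm : m = m') (hn : n = n')
    (A : Matrix (Fin m) (Fin n) ℝ) : Matrix (Fin m') (Fin n') ℝ :=
  Matrix.reindex (finCongr hm) (finCongr hn) A

/-- The `ℓ`-th base-`d` digit (most significant first) of an index `a < d^k`. -/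
def digit (d k : ℕ) [NeZero d] (a : Fin (d ^ k)) (ℓ : ℕ) : Fin d :=
  ⟨(a : ℕ) / d ^ (k - 1 - ℓ) % d, Nat.mod_lt _ (Nat.pos_of_ne_zero (NeZero.ne d))⟩

/-- The `k`-fold Kronecker product `M 0 ⊗ M 1 ⊗ ⋯ ⊗ M (k-1)` of `d × d` matrices,
as a `d^k × d^k` matrix. -/
def kronPow {d : ℕ} [NeZero d] (k : ℕ) (M : Fin k → Matrix (Fin d) (Fin d) ℝ) :
    Matrix (Fin (d ^ k)) (Fin (d ^ k)) ℝ := fun a b =>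
  ∏ ℓ : Fin k, M ℓ (digit d k a ℓ) (digit d k b ℓ)

/-- The `k`-fold Kronecker product `v 0 ⊗ v 1 ⊗ ⋯ ⊗ v (k-1)` of vectors in `ℝ^d`,
as a vector in `ℝ^{d^k}`. -/
def vkron {d : ℕ} [NeZero d] (k : ℕ) (v : Fin k → (Fin d → ℝ)) : Fin (d ^ k) → ℝ :=
  fun a => ∏ ℓ : Fin k, v ℓ (digit d k a ℓ)

/-- The symmetrizer matrix
`S_{d,r} = (1/r!) Σ_{i_1,...,i_r} Σ_{σ ∈ P_r} ⊗_{ℓ=1}^r e_{i_ℓ} e_{i_{σ(ℓ)}}ᵀ`. -/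
noncomputable def symr (d : ℕ) [NeZero d] (r : ℕ) :
    Matrix (Fin (d ^ r)) (Fin (d ^ r)) ℝ :=
  ((r.factorial : ℝ)⁻¹) •
    ∑ i : Fin r → Fin d, ∑ σ : Equiv.Perm (Fin r),
      kronPow r fun ℓ => Matrix.single (i ℓ) (i (σ ℓ)) 1

/-- The matrix `T_{d,r} = (1/r) Σ_{j=1}^r (I_{d^j} ⊗ K_{d^{r−j−1},d})(I_{d^{j−1}} ⊗ K_{d,d^{r−j}})`,
with the convention `K_{d^{−1},d} = 1 ∈ ℝ` (so that the `j = r` summand's first factor is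
`I_{d^r} ⊗ 1 = I_{d^r}`). -/
noncomputable def Tmat (d r : ℕ) : Matrix (Fin (d ^ r)) (Fin (d ^ r)) ℝ :=
  ((r : ℝ)⁻¹) •
    ∑ j ∈ (Finset.Icc 1 r).attach,
      (if h : j.1 = r then (1 : Matrix (Fin (d ^ r)) (Fin (d ^ r)) ℝ)
        else mcast
          (by
            have hj := Finset.mem_Icc.mp j.2
            rw [← pow_succ d (r - j.1 - 1), ← pow_add]; congr 1; omega)
          (by
            have hj := Finset.mem_Icc.mp j.2
            rw [← pow_succ d (r - j.1 - 1), ← pow_add]; congr 1; omega)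
          (kron (1 : Matrix (Fin (d ^ j.1)) (Fin (d ^ j.1)) ℝ)
            (commMat (d ^ (r - j.1 - 1)) d))) *
      mcast
        (by
          have hj := Finset.mem_Icc.mp j.2
          rw [← pow_succ' d (r - j.1), ← pow_add]; congr 1; omega)
        (by
          have hj := Finset.mem_Icc.mp j.2
          rw [← pow_succ' d (r - j.1), ← pow_add]; congr 1; omega)
        (kron (1 : Matrix (Fin (d ^ (j.1 - 1))) (Fin (d ^ (j.1 - 1))) ℝ)
          (commMat d (d ^ (r - j.1))))


/-!
Index `Fin (d ^ r)` by strings of `r` base-`d` digits. Every matrix in the statement is then a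
combination of the matrices `P σ` permuting digit positions, and `σ ↦ P σ` is multiplicative.
The commutation matrices `K_{d,d^n}` and `K_{d^n,d}` rotate digit positions cyclically, so the
`j`-th summand of `T_{d,k}` permutes the digits by the transposition `(j k)`, and
`T_{d,k} ⊗ I_{d^{r-k}}` is the average of `P (j k)` over `j ≤ k`. As `S_{d,r}` is the average of
`P σ` over all permutations, the factorization follows from the unique decomposition of every
permutation of `{1, …, k}` as `σ (j k)` with `j ≤ k` and `σ` fixing `k`.
-/

open Equiv

theorem Nat.mod_pow_div_mod {d n t : ℕ} (a : ℕ) (ht : t < n) :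
    a % d ^ n / d ^ t % d = a / d ^ t % d := by
  rw [show n = t + (n - t) by omega, pow_add, Nat.mod_mul_right_div_self,
    Nat.mod_mod_of_dvd _ (dvd_pow_self d (by omega))]

section Tuples

theorem Fin.append_inj {α : Type*} {m n : ℕ} {x x' : Fin m → α} {y y' : Fin n → α} :
    Fin.append x y = Fin.append x' y' ↔ x = x' ∧ y = y' := by
  refine ⟨fun h => ⟨funext fun i => ?_, funext fun i => ?_⟩, fun h => h.1 ▸ h.2 ▸ rfl⟩
  · simpa using congrFun h (Fin.castAdd n i)
  · simpa using congrFun h (Fin.natAdd m i)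

theorem Fin.swap_apply_val {n : ℕ} (i j ℓ : Fin n) :
    (swap i j ℓ : ℕ) = if ℓ = i then (j : ℕ) else if ℓ = j then (i : ℕ) else ℓ := by
  rw [swap_apply_def]
  split_ifs <;> rfl

theorem cons_comp_finRotate {α : Type*} {n : ℕ} (x : α) (f : Fin n → α) :
    (Fin.cons x f : Fin (n + 1) → α) ∘ finRotate (n + 1) = Fin.snoc f x :=
  (Fin.snoc_eq_cons_rotate f x).symm

theorem snoc_comp_finRotate_symm {α : Type*} {n : ℕ} (f : Fin n → α) (x : α) :
    (Fin.snoc f x : Fin (n + 1) → α) ∘ (finRotate (n + 1)).symm = Fin.cons x f := by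
  rw [Fin.snoc_eq_cons_rotate]
  funext i
  simp

theorem finRotate_symm_apply_val {n : ℕ} (i : Fin (n + 1)) :
    ((finRotate (n + 1)).symm i : ℕ) = if (i : ℕ) = 0 then n else i - 1 := by
  split_ifs with h
  · rw [show i = 0 from Fin.ext h, ← finRotate_last, Equiv.symm_apply_apply, Fin.val_last]
  · exact coe_finRotate_symm_of_ne_zero (Fin.ne_of_val_ne h)

def permAppend {m n : ℕ} (σ : Perm (Fin m)) (τ : Perm (Fin n)) : Perm (Fin (m + n)) :=
  finSumFinEquiv.permCongr (σ.sumCongr τ)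

theorem append_comp_permAppend {α : Type*} {m n : ℕ} (σ : Perm (Fin m)) (τ : Perm (Fin n))
    (x : Fin m → α) (y : Fin n → α) :
    Fin.append x y ∘ permAppend σ τ = Fin.append (x ∘ σ) (y ∘ τ) := by
  funext ℓ
  refine Fin.addCases (fun i => ?_) (fun i => ?_) ℓ <;> simp [permAppend]

theorem permAppend_swap_one {m n r : ℕ} (h : m + n = r) (i j : Fin m) :
    (finCongr h).permCongr (permAppend (swap i j) (1 : Perm (Fin n))) =
      swap (Fin.castLE (by omega) i) (Fin.castLE (by omega) j) := by
  subst h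
  simp only [finCongr_refl, permAppend, Perm.sumCongr_swap_one, permCongr_def,
    symm_trans_swap_trans, finSumFinEquiv_apply_left]
  rfl

theorem permAppend_one_apply_val {m n r : ℕ} (h : m + n = r) (τ : Perm (Fin n)) (ℓ : Fin r) :
    ((finCongr h).permCongr (permAppend 1 τ) ℓ : ℕ) =
      if hℓ : (ℓ : ℕ) < m then (ℓ : ℕ) else m + τ ⟨ℓ - m, by omega⟩ := by
  subst h
  refine Fin.addCases (fun i => ?_) (fun i => ?_) ℓ <;> simp [permAppend]

/-- The cyclic shift of positions `j - 1, …, r - 1` followed by the inverse shift of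
`j, …, r - 1` exchanges positions `j - 1` and `r - 1`. -/
theorem rotations_mul_eq_swap {r j : ℕ} (hj : 1 ≤ j) (hjr : j < r)
    (h₁ : j + (r - j - 1 + 1) = r) (h₂ : j - 1 + (r - j + 1) = r) :
    (finCongr h₁).permCongr (permAppend 1 (finRotate (r - j - 1 + 1)).symm) *
        (finCongr h₂).permCongr (permAppend 1 (finRotate (r - j + 1))) =
      swap ⟨j - 1, by omega⟩ ⟨r - 1, by omega⟩ := by
  have val₁ (x : Fin r) :
      ((finCongr h₁).permCongr (permAppend 1 (finRotate (r - j - 1 + 1)).symm) x : ℕ) =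
        if (x : ℕ) < j then (x : ℕ) else if (x : ℕ) = j then r - 1 else x - 1 := by
    simp only [permAppend_one_apply_val, finRotate_symm_apply_val]
    split_ifs <;> omega
  have val₂ (x : Fin r) :
      ((finCongr h₂).permCongr (permAppend 1 (finRotate (r - j + 1))) x : ℕ) =
        if (x : ℕ) < j - 1 then (x : ℕ) else if (x : ℕ) = r - 1 then j - 1 else x + 1 := by
    simp only [permAppend_one_apply_val, coe_finRotate, Fin.ext_iff, Fin.val_last]
    split_ifs <;> omega
  ext ℓ
  rw [Perm.mul_apply, val₁, val₂, Fin.swap_apply_val]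
  simp only [Fin.ext_iff]
  split_ifs <;> omega

theorem rotation_last_eq_swap_self {r j : ℕ} (hj : 1 ≤ j) (hjr : j = r)
    (h : j - 1 + (r - j + 1) = r) :
    (finCongr h).permCongr (permAppend 1 (finRotate (r - j + 1))) =
      swap ⟨j - 1, by omega⟩ ⟨r - 1, by omega⟩ := by
  ext ℓ
  simp only [permAppend_one_apply_val, coe_finRotate, Fin.swap_apply_val, Fin.ext_iff,
    Fin.val_last]
  split_ifs <;> omega

end Tuples

section Casts

theorem mcast_rfl {m n : ℕ} (A : Matrix (Fin m) (Fin n) ℝ) : mcast rfl rfl A = A := by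
  simp [mcast]

theorem mcast_apply {m n m' n' : ℕ} (hm : m = m') (hn : n = n') (A : Matrix (Fin m) (Fin n) ℝ)
    (i : Fin m') (j : Fin n') : mcast hm hn A i j = A (Fin.cast hm.symm i) (Fin.cast hn.symm j) :=
  rfl

theorem mcast_smul {m n m' n' : ℕ} (hm : m = m') (hn : n = n') (c : ℝ)
    (A : Matrix (Fin m) (Fin n) ℝ) : mcast hm hn (c • A) = c • mcast hm hn A :=
  rfl

theorem mcast_sum {m n m' n' : ℕ} (hm : m = m') (hn : n = n') {ι : Type*} (s : Finset ι)
    (A : ι → Matrix (Fin m) (Fin n) ℝ) :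
    mcast hm hn (∑ i ∈ s, A i) = ∑ i ∈ s, mcast hm hn (A i) :=
  map_sum (Matrix.reindexLinearEquiv ℝ ℝ (finCongr hm) (finCongr hn)) A s

theorem kron_smul_left {m n p q : ℕ} (c : ℝ) (A : Matrix (Fin m) (Fin n) ℝ)
    (B : Matrix (Fin p) (Fin q) ℝ) : kron (c • A) B = c • kron A B := by
  ext i j
  exact mul_assoc c _ _

theorem kron_sum_left {m n p q : ℕ} {ι : Type*} (s : Finset ι)
    (A : ι → Matrix (Fin m) (Fin n) ℝ) (B : Matrix (Fin p) (Fin q) ℝ) :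
    kron (∑ i ∈ s, A i) B = ∑ i ∈ s, kron (A i) B := by
  ext i j
  simp only [kron, Matrix.sum_apply, Finset.sum_mul]

end Casts

section Digits

def digits (d r : ℕ) [NeZero d] : Fin (d ^ r) ≃ (Fin r → Fin d) :=
  finFunctionFinEquiv.symm.trans (Equiv.arrowCongr Fin.revPerm (Equiv.refl _))

variable {d : ℕ} [NeZero d]

theorem digits_apply_val (r : ℕ) (a : Fin (d ^ r)) (ℓ : Fin r) :
    (digits d r a ℓ : ℕ) = a / d ^ (r - 1 - ℓ) % d := by
  simp only [digits, trans_apply, arrowCongr_apply, coe_refl, Fin.revPerm_symm,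
    Function.comp_apply, Fin.revPerm_apply, id_eq, finFunctionFinEquiv_symm_apply_val, Fin.val_rev]
  congr 3
  omega

theorem digits_apply (r : ℕ) (a : Fin (d ^ r)) (ℓ : Fin r) :
    digits d r a ℓ = digit d r a ℓ :=
  Fin.ext (digits_apply_val r a ℓ)

theorem digits_add {m n : ℕ} (a : Fin (d ^ (m + n))) :
    digits d (m + n) a =
      Fin.append
        (digits d m ⟨a / d ^ n, Nat.div_lt_of_lt_mul (a.2.trans_eq (by rw [pow_add, mul_comm]))⟩)
        (digits d n ⟨a % d ^ n, Nat.mod_lt _ (pow_pos (Nat.pos_of_neZero d) n)⟩) := by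
  funext ℓ
  refine Fin.addCases (fun i => ?_) (fun i => ?_) ℓ <;>
    simp only [Fin.append_left, Fin.append_right] <;> ext <;>
    simp only [digits_apply_val, Fin.val_castAdd, Fin.val_natAdd]
  · rw [Nat.div_div_eq_div_mul, ← pow_add]
    congr 3
    omega
  · rw [Nat.mod_pow_div_mod _ (by omega)]
    congr 3
    omega

theorem digits_succ_eq_cons {n : ℕ} (a : Fin (d ^ (n + 1))) :
    digits d (n + 1) a =
      Fin.cons ⟨a / d ^ n, Nat.div_lt_of_lt_mul (by rw [← pow_succ]; exact a.2)⟩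
        (digits d n ⟨a % d ^ n, Nat.mod_lt _ (pow_pos (Nat.pos_of_neZero d) n)⟩) := by
  funext ℓ
  refine Fin.cases ?_ (fun i => ?_) ℓ <;> simp only [Fin.cons_zero, Fin.cons_succ] <;> ext <;>
    simp only [digits_apply_val, Fin.val_zero, Fin.val_succ]
  · rw [Nat.mod_eq_of_lt (Nat.div_lt_of_lt_mul (by rw [← pow_succ]; exact a.2))]
    simp
  · rw [Nat.mod_pow_div_mod _ (by omega)]
    congr 3
    omega

theorem digits_succ_eq_snoc {n : ℕ} (a : Fin (d ^ (n + 1))) :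
    digits d (n + 1) a =
      Fin.snoc (digits d n ⟨a / d, Nat.div_lt_of_lt_mul (by rw [← pow_succ']; exact a.2)⟩)
        ⟨a % d, Nat.mod_lt _ (Nat.pos_of_neZero d)⟩ := by
  funext ℓ
  refine Fin.lastCases ?_ (fun i => ?_) ℓ <;> simp only [Fin.snoc_last, Fin.snoc_castSucc] <;>
    ext <;> simp only [digits_apply_val, Fin.val_last, Fin.val_castSucc]
  · simp
  · rw [Nat.div_div_eq_div_mul, ← pow_succ']
    congr 3
    omega

end Digits

section DigitPermMatrix

def digitPerm (d r : ℕ) [NeZero d] (σ : Perm (Fin r)) : Perm (Fin (d ^ r)) :=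
  (digits d r).symm.permCongr (σ.symm.arrowCongr (Equiv.refl (Fin d)))

variable {d : ℕ} [NeZero d]

theorem digits_digitPerm {r : ℕ} (σ : Perm (Fin r)) (a : Fin (d ^ r)) :
    digits d r (digitPerm d r σ a) = digits d r a ∘ σ := by
  simp only [digitPerm, permCongr_apply, symm_symm, apply_symm_apply]
  rfl

theorem digitPerm_one (r : ℕ) : digitPerm d r 1 = 1 :=
  Equiv.ext fun a => (digits d r).injective (digits_digitPerm 1 a)

theorem digitPerm_mul {r : ℕ} (σ τ : Perm (Fin r)) :
    digitPerm d r (σ * τ) = digitPerm d r τ * digitPerm d r σ :=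
  Equiv.ext fun a => (digits d r).injective <| by
    simp only [digits_digitPerm, Perm.coe_mul, Perm.mul_apply, Function.comp_assoc]

def digitPermMatrix (d r : ℕ) [NeZero d] :
    Perm (Fin r) →* Matrix (Fin (d ^ r)) (Fin (d ^ r)) ℝ where
  toFun σ := (digitPerm d r σ).permMatrix ℝ
  map_one' := by rw [digitPerm_one, Matrix.permMatrix_one]
  map_mul' σ τ := by rw [digitPerm_mul, Matrix.permMatrix_mul]

theorem digitPermMatrix_apply {r : ℕ} (σ : Perm (Fin r)) (a b : Fin (d ^ r)) :
    digitPermMatrix d r σ a b = if digits d r b = digits d r a ∘ σ then 1 else 0 := by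
  simp only [digitPermMatrix, MonoidHom.coe_mk, OneHom.coe_mk, PEquiv.toMatrix_apply,
    Equiv.toPEquiv_apply, Option.mem_def, Option.some_inj, ← digits_digitPerm,
    (digits d r).apply_eq_iff_eq, eq_comm]

theorem mcast_kron_digitPermMatrix {m n : ℕ} (σ : Perm (Fin m)) (τ : Perm (Fin n))
    (h₁ h₂ : d ^ m * d ^ n = d ^ (m + n)) :
    mcast h₁ h₂ (kron (digitPermMatrix d m σ) (digitPermMatrix d n τ)) =
      digitPermMatrix d (m + n) (permAppend σ τ) := by
  ext a b
  rw [digitPermMatrix_apply, digits_add a, digits_add b, append_comp_permAppend]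
  simp only [Fin.append_inj, ite_and, mcast_apply, kron, digitPermMatrix_apply, Fin.val_cast]
  split_ifs <;> simp

theorem mcast_kron_eq_digitPermMatrix {p q m n r : ℕ} {A : Matrix (Fin p) (Fin p) ℝ}
    {B : Matrix (Fin q) (Fin q) ℝ} {σ : Perm (Fin m)} {τ : Perm (Fin n)}
    (hp : p = d ^ m) (hq : q = d ^ n) (hA : mcast hp hp A = digitPermMatrix d m σ)
    (hB : mcast hq hq B = digitPermMatrix d n τ) (h : m + n = r) (h₁ h₂ : p * q = d ^ r) :
    mcast h₁ h₂ (kron A B) = digitPermMatrix d r ((finCongr h).permCongr (permAppend σ τ)) := by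
  subst hp hq h
  rw [mcast_rfl] at hA hB
  subst hA hB
  convert mcast_kron_digitPermMatrix σ τ h₁ h₂ using 2
  ext
  simp

theorem mcast_commMat_self_pow (n : ℕ) (h₁ h₂ : d * d ^ n = d ^ (n + 1)) :
    mcast h₁ h₂ (commMat d (d ^ n)) = digitPermMatrix d (n + 1) (finRotate (n + 1)) := by
  ext a b
  have hb : (b : ℕ) / d < d ^ n := Nat.div_lt_of_lt_mul (b.2.trans_eq (pow_succ' d n))
  have key : (a : ℕ) = b / d + b % d * d ^ n ↔
      (b : ℕ) / d = a % d ^ n ∧ (b : ℕ) % d = a / d ^ n := by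
    rw [and_comm, eq_comm (a := (b : ℕ) / d), eq_comm (a := (b : ℕ) % d),
      Nat.div_mod_unique (pow_pos (Nat.pos_of_neZero d) n), mul_comm]
    simp [hb, eq_comm]
  rw [digitPermMatrix_apply, digits_succ_eq_cons a, cons_comp_finRotate, digits_succ_eq_snoc b]
  simp only [Fin.snoc_inj, (digits d n).apply_eq_iff_eq, Fin.ext_iff, ← key]
  rfl

theorem mcast_commMat_pow_self (n : ℕ) (h₁ h₂ : d ^ n * d = d ^ (n + 1)) :
    mcast h₁ h₂ (commMat (d ^ n) d) = digitPermMatrix d (n + 1) (finRotate (n + 1)).symm := by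
  ext a b
  have hb : (b : ℕ) / d ^ n < d := Nat.div_lt_of_lt_mul (b.2.trans_eq (pow_succ d n))
  have key : (a : ℕ) = b / d ^ n + b % d ^ n * d ↔
      (b : ℕ) / d ^ n = a % d ∧ (b : ℕ) % d ^ n = a / d := by
    rw [and_comm, eq_comm (a := (b : ℕ) / d ^ n), eq_comm (a := (b : ℕ) % d ^ n),
      Nat.div_mod_unique (Nat.pos_of_neZero d), mul_comm]
    simp [hb, eq_comm]
  rw [digitPermMatrix_apply, digits_succ_eq_snoc a, snoc_comp_finRotate_symm,
    digits_succ_eq_cons b]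
  simp only [Fin.cons_inj, (digits d n).apply_eq_iff_eq, Fin.ext_iff, ← key]
  rfl

theorem mcast_kron_one_commMat_self_pow {u n r : ℕ} (h : u + (n + 1) = r)
    (h₁ h₂ : d ^ u * (d * d ^ n) = d ^ r) :
    mcast h₁ h₂ (kron (1 : Matrix (Fin (d ^ u)) (Fin (d ^ u)) ℝ) (commMat d (d ^ n))) =
      digitPermMatrix d r ((finCongr h).permCongr (permAppend 1 (finRotate (n + 1)))) :=
  mcast_kron_eq_digitPermMatrix rfl (pow_succ' d n).symm (by rw [mcast_rfl, map_one])
    (mcast_commMat_self_pow n _ _) h h₁ h₂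

theorem mcast_kron_one_commMat_pow_self {u n r : ℕ} (h : u + (n + 1) = r)
    (h₁ h₂ : d ^ u * (d ^ n * d) = d ^ r) :
    mcast h₁ h₂ (kron (1 : Matrix (Fin (d ^ u)) (Fin (d ^ u)) ℝ) (commMat (d ^ n) d)) =
      digitPermMatrix d r ((finCongr h).permCongr (permAppend 1 (finRotate (n + 1)).symm)) :=
  mcast_kron_eq_digitPermMatrix rfl (pow_succ d n).symm (by rw [mcast_rfl, map_one])
    (mcast_commMat_pow_self n _ _) h h₁ h₂

end DigitPermMatrix

section SwapAverage

def fixingFrom (r m : ℕ) : Finset (Perm (Fin r)) :=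
  {σ | ∀ ℓ : Fin r, m ≤ ℓ → σ ℓ = ℓ}

noncomputable def swapAverage {r : ℕ} {R : Type*} [Semiring R] [Module ℝ R]
    (f : Perm (Fin r) →* R) (k : Fin r) : R :=
  ((k : ℝ) + 1)⁻¹ • ∑ j ∈ Finset.Iic k, f (swap j k)

variable {r : ℕ}

theorem mem_fixingFrom {m : ℕ} {σ : Perm (Fin r)} :
    σ ∈ fixingFrom r m ↔ ∀ ℓ : Fin r, m ≤ ℓ → σ ℓ = ℓ := by
  simp [fixingFrom]

theorem fixingFrom_zero : fixingFrom r 0 = {1} := by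
  ext σ
  simp [mem_fixingFrom, Equiv.ext_iff]

theorem fixingFrom_self : fixingFrom r r = Finset.univ := by
  ext σ
  simp only [mem_fixingFrom, Finset.mem_univ, iff_true]
  exact fun ℓ hℓ => absurd ℓ.2 (by omega)

theorem mul_swap_mem_fixingFrom_succ {σ : Perm (Fin r)} {j k : Fin r}
    (hσ : σ ∈ fixingFrom r k) (hj : j ≤ k) : σ * swap j k ∈ fixingFrom r (k + 1) := by
  rw [mem_fixingFrom] at hσ ⊢
  intro ℓ hℓ
  rw [Perm.mul_apply, swap_apply_of_ne_of_ne (by grind) (by grind), hσ ℓ (by omega)]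

theorem inv_apply_le_of_mem_fixingFrom_succ {π : Perm (Fin r)} {k : Fin r}
    (hπ : π ∈ fixingFrom r (k + 1)) : π⁻¹ k ≤ k := by
  by_contra! h
  have := (mem_fixingFrom.mp hπ) (π⁻¹ k) (Fin.lt_def.mp h)
  rw [← Perm.mul_apply, mul_inv_cancel, Perm.one_apply] at this
  exact h.ne this

theorem mul_swap_inv_apply_mem_fixingFrom {π : Perm (Fin r)} {k : Fin r}
    (hπ : π ∈ fixingFrom r (k + 1)) : π * swap (π⁻¹ k) k ∈ fixingFrom r k := by
  have hle := inv_apply_le_of_mem_fixingFrom_succ hπ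
  rw [mem_fixingFrom] at hπ ⊢
  intro ℓ hℓ
  rcases (Fin.le_iff_val_le_val.mpr hℓ).eq_or_lt with rfl | hlt
  · simp
  · rw [Perm.mul_apply, swap_apply_of_ne_of_ne (hle.trans_lt hlt).ne' hlt.ne', hπ ℓ hlt]

/-- `(σ, j) ↦ σ * swap j k` is a bijection onto `fixingFrom r (k + 1)`, with inverse
`π ↦ (π * swap (π⁻¹ k) k, π⁻¹ k)`. -/
theorem sum_fixingFrom_succ {M : Type*} [AddCommMonoid M] (g : Perm (Fin r) → M) (k : Fin r) :
    ∑ σ ∈ fixingFrom r k, ∑ j ∈ Finset.Iic k, g (σ * swap j k) =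
      ∑ π ∈ fixingFrom r (k + 1), g π := by
  rw [← Finset.sum_product']
  refine Finset.sum_nbij' (fun p => p.1 * swap p.2 k) (fun π => (π * swap (π⁻¹ k) k, π⁻¹ k))
    (fun p hp => ?_) (fun π hπ => ?_) (fun p hp => ?_) (fun π _ => ?_) (fun _ _ => rfl)
  · obtain ⟨hσ, hj⟩ := Finset.mem_product.mp hp
    exact mul_swap_mem_fixingFrom_succ hσ (Finset.mem_Iic.mp hj)
  · exact Finset.mem_product.mpr ⟨mul_swap_inv_apply_mem_fixingFrom hπ,
      Finset.mem_Iic.mpr (inv_apply_le_of_mem_fixingFrom_succ hπ)⟩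
  · obtain ⟨hσ, -⟩ := Finset.mem_product.mp hp
    have hk : p.1.symm k = k := by
      rw [Equiv.symm_apply_eq]
      exact ((mem_fixingFrom.mp hσ) k le_rfl).symm
    simp [hk]
  · simp

theorem prod_ofFn_swapAverage {R : Type*} [Ring R] [Algebra ℝ R] (f : Perm (Fin r) →* R)
    (m : ℕ) (hm : m ≤ r) :
    (List.ofFn fun i : Fin m => swapAverage f (Fin.castLE hm i)).prod =
      (m.factorial : ℝ)⁻¹ • ∑ σ ∈ fixingFrom r m, f σ := by
  induction m with
  | zero => simp [fixingFrom_zero]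
  | succ m ih =>
    rw [List.ofFn_succ', List.prod_concat]
    simp only [Fin.castLE_castSucc]
    rw [ih (by omega), swapAverage, smul_mul_smul_comm, Finset.sum_mul_sum]
    simp only [← map_mul]
    have := sum_fixingFrom_succ f (Fin.castLE hm (Fin.last m))
    simp only [Fin.val_castLE, Fin.val_last] at this ⊢
    rw [this, Nat.factorial_succ]
    push_cast
    rw [mul_inv, mul_comm]

end SwapAverage

section Factors

variable {d : ℕ} [NeZero d]

theorem Tmat_eq_sum_swap (r : ℕ) :
    Tmat d r = (r : ℝ)⁻¹ • ∑ j ∈ (Finset.Icc 1 r).attach, digitPermMatrix d r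
      (swap ⟨j - 1, by have := Finset.mem_Icc.mp j.2; omega⟩
        ⟨r - 1, by have := Finset.mem_Icc.mp j.2; omega⟩) := by
  unfold Tmat
  congr 1
  refine Finset.sum_congr rfl fun j _ => ?_
  obtain ⟨hj, hjr⟩ := Finset.mem_Icc.mp j.2
  rw [mcast_kron_one_commMat_self_pow (by omega)]
  split_ifs with h
  · rw [one_mul, rotation_last_eq_swap_self hj h]
  · rw [mcast_kron_one_commMat_pow_self (by omega), ← map_mul,
      rotations_mul_eq_swap hj (by omega)]

theorem Tmat_succ (k : ℕ) :
    Tmat d (k + 1) = ((k : ℝ) + 1)⁻¹ •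
      ∑ j : Fin (k + 1), digitPermMatrix d (k + 1) (swap j (Fin.last k)) := by
  rw [Tmat_eq_sum_swap, ← Finset.univ_eq_attach]
  push_cast
  congr 1
  let e : Finset.Icc 1 (k + 1) ≃ Fin (k + 1) :=
    { toFun j := ⟨j - 1, by grind [Finset.mem_Icc.mp j.2]⟩
      invFun i := ⟨i + 1, Finset.mem_Icc.mpr ⟨by omega, by omega⟩⟩
      left_inv j := Subtype.ext (by grind [Finset.mem_Icc.mp j.2])
      right_inv i := Fin.ext (by simp) }
  exact Fintype.sum_equiv e _ _ fun j => rfl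

theorem mcast_kron_Tmat_one {k r : ℕ} (hk : k < r)
    (h₁ h₂ : d ^ (k + 1) * d ^ (r - (k + 1)) = d ^ r) :
    mcast h₁ h₂ (kron (Tmat d (k + 1))
      (1 : Matrix (Fin (d ^ (r - (k + 1)))) (Fin (d ^ (r - (k + 1)))) ℝ)) =
      swapAverage (digitPermMatrix d r) ⟨k, hk⟩ := by
  rw [Tmat_succ, kron_smul_left, kron_sum_left, mcast_smul, mcast_sum, swapAverage]
  congr 1
  have hkr : k + 1 + (r - (k + 1)) = r := by omega
  calc ∑ j : Fin (k + 1), mcast h₁ h₂ (kron (digitPermMatrix d (k + 1) (swap j (Fin.last k))) 1)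
      _ = ∑ j : Fin (k + 1), digitPermMatrix d r
            (swap (Fin.castLE hk j) (Fin.castLE hk (Fin.last k))) := by
        refine Fintype.sum_congr _ _ fun j => ?_
        rw [mcast_kron_eq_digitPermMatrix rfl rfl (mcast_rfl _) (by rw [mcast_rfl, map_one]) hkr,
          permAppend_swap_one]
      _ = ∑ j ∈ Finset.Iic (⟨k, hk⟩ : Fin r), digitPermMatrix d r (swap j ⟨k, hk⟩) := by
        rw [show (⟨k, hk⟩ : Fin r) = Fin.castLE hk (Fin.last k) from rfl,
          ← Fin.map_castLEEmb_Iic, Finset.sum_map, ← Fin.top_eq_last, Finset.Iic_top]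
        rfl

theorem sum_kronPow_single {r : ℕ} (σ : Perm (Fin r)) :
    ∑ i : Fin r → Fin d, kronPow r (fun ℓ => Matrix.single (i ℓ) (i (σ ℓ)) (1 : ℝ)) =
      digitPermMatrix d r σ := by
  ext a b
  have hcond (i : Fin r → Fin d) :
      (∀ ℓ ∈ Finset.univ, i ℓ = digits d r a ℓ ∧ i (σ ℓ) = digits d r b ℓ) ↔
        i = digits d r a ∧ digits d r b = digits d r a ∘ σ := by
    simp only [Finset.mem_univ, true_implies, forall_and, funext_iff, Function.comp_apply]
    constructor
    · rintro ⟨hi, hσ⟩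
      exact ⟨hi, fun ℓ => (hσ ℓ).symm.trans (hi _)⟩
    · rintro ⟨hi, hσ⟩
      exact ⟨hi, fun ℓ => (hi _).trans (hσ ℓ).symm⟩
  simp only [Matrix.sum_apply, kronPow, Matrix.single_apply, ← digits_apply, Finset.prod_boole,
    hcond]
  simp [ite_and, digitPermMatrix_apply]

theorem symr_eq_sum_digitPermMatrix (r : ℕ) :
    symr d r = (r.factorial : ℝ)⁻¹ • ∑ σ : Perm (Fin r), digitPermMatrix d r σ := by
  rw [symr, Finset.sum_comm]
  simp only [sum_kronPow_single]

end Factors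

/-- Corollary 1: for `r ≥ 1` the symmetrizer matrix factorizes as
`S_{d,r} = (T_{d,1} ⊗ I_{d^{r−1}})(T_{d,2} ⊗ I_{d^{r−2}}) ⋯ (T_{d,r−1} ⊗ I_d) T_{d,r}`,
the ordered product over `k = 1, ..., r` of `T_{d,k} ⊗ I_{d^{r−k}}`. -/
theorem symmetrizer_factorization (d : ℕ) [NeZero d] (r : ℕ) :
    symr d r =
      (((List.range r).pmap
        (fun k (hk : k < r) =>
          (mcast (by rw [← pow_add]; congr 1; omega) (by rw [← pow_add]; congr 1; omega)
            (kron (Tmat d (k + 1))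
              (1 : Matrix (Fin (d ^ (r - (k + 1)))) (Fin (d ^ (r - (k + 1)))) ℝ)) :
            Matrix (Fin (d ^ r)) (Fin (d ^ r)) ℝ))
        (fun a ha => List.mem_range.mp ha)).prod) := by
  rw [List.pmap_congr_left (g := fun k hk => swapAverage (digitPermMatrix d r) ⟨k, hk⟩)
    (H₂ := fun _ => List.mem_range.mp) _ fun k _ hk _ => mcast_kron_Tmat_one hk _ _,
    ← List.ofFn_eq_pmap, symr_eq_sum_digitPermMatrix, ← fixingFrom_self]
  simpa using (prod_ofFn_swapAverage (digitPermMatrix d r) r le_rfl).symm
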